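/- Monotonicity of the excited energy: fix α > 2. If 0 < ω₁ ≤ ω₂ then E*(ω₁) ≤ E*(ω₂). (Key step: inf{−U(x) : K_ω(x) = 0} = inf{−U(x) : K_ω(x) ≤ 0}, and {K_{ω₂} = 0} ⊆ {K_{ω₁} ≤ 0} when ω₁ ≤ ω₂.) -/

import Mathlib

/- STATEMENT 16: monotonicity of the excited energy: for α > 2, if 0 < ω₁ ≤ ω₂ then
E*(ω₁) ≤ E*(ω₂). -/

namespace NBodyPaper

open Real

noncomputable section

abbrev E3 := EuclideanSpace ℝ (Fin 3)

variable {N : ℕ}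

/-- The α-homogeneous potential `U(x) = -∑_{i<j} m_i m_j / |x_i - x_j|^α`. -/
def pot (α : ℝ) (m : Fin N → ℝ) (q : Fin N → E3) : ℝ :=
  -∑ i : Fin N, ∑ j ∈ Finset.univ.filter (fun j => i < j), m i * m j / ‖q i - q j‖ ^ α

/-- Moment of inertia `I(x) = ∑ m_i |x_i|²`. -/
def inertia (m : Fin N → ℝ) (q : Fin N → E3) : ℝ := ∑ i, m i * ‖q i‖ ^ 2

/-- Collision-free configuration. -/
def OffDiag (q : Fin N → E3) : Prop := ∀ i j, i ≠ j → q i ≠ q j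

/-- Center of mass at the origin. -/
def comZero (m : Fin N → ℝ) (q : Fin N → E3) : Prop := ∑ i, m i • q i = 0

/-- The threshold function `K_ω(x) = ω² I(x) + α U(x)`. -/
def Kfun (α : ℝ) (m : Fin N → ℝ) (ω : ℝ) (q : Fin N → E3) : ℝ :=
  ω ^ 2 * inertia m q + α * pot α m q

/-- `E_ω(x) = (ω²/2) I(x) + U(x)`. -/
def Eomega (α : ℝ) (m : Fin N → ℝ) (ω : ℝ) (q : Fin N → E3) : ℝ :=
  ω ^ 2 / 2 * inertia m q + pot α m q

/-- The excited energy `E*(ω) = inf { E_ω(x) : K_ω(x) = 0 }`, the infimum taken over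
collision-free configurations with center of mass zero. -/
def Estar (α : ℝ) (m : Fin N → ℝ) (ω : ℝ) : ℝ :=
  sInf {e : ℝ | ∃ q : Fin N → E3, OffDiag q ∧ comZero m q ∧ Kfun α m ω q = 0 ∧ e = Eomega α m ω q}

/-- The potential is nonpositive. -/
lemma pot_nonpos (α : ℝ) (m : Fin N → ℝ) (hm : ∀ i, 0 < m i) (q : Fin N → E3) :
    pot α m q ≤ 0 := by
  unfold pot
  rw [neg_nonpos]
  apply Finset.sum_nonneg
  intro i _
  apply Finset.sum_nonneg
  intro j _
  have hi := (hm i).le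
  have hj := (hm j).le
  positivity

/-- Scaling of the potential. -/
lemma pot_smul (α : ℝ) (m : Fin N → ℝ) (q : Fin N → E3) {l : ℝ} (hl : 0 < l) :
    pot α m (fun i => l • q i) = l ^ (-α) * pot α m q := by
  have key : ∀ i j : Fin N, m i * m j / ‖l • q i - l • q j‖ ^ α
      = l ^ (-α) * (m i * m j / ‖q i - q j‖ ^ α) := by
    intro i j
    rw [← smul_sub, norm_smul, Real.norm_eq_abs, abs_of_pos hl,
      Real.mul_rpow hl.le (norm_nonneg _), Real.rpow_neg hl.le,
      div_mul_eq_div_div_swap, div_eq_inv_mul]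
  unfold pot
  simp only [key, ← Finset.mul_sum, mul_neg]

/-- Scaling of the moment of inertia. -/
lemma inertia_smul (m : Fin N → ℝ) (q : Fin N → E3) (l : ℝ) :
    inertia m (fun i => l • q i) = l ^ 2 * inertia m q := by
  unfold inertia
  rw [Finset.mul_sum]
  congr 1; ext i
  rw [norm_smul, Real.norm_eq_abs, mul_pow, sq_abs]
  ring

/-- On the constraint set, the energy is a multiple of the potential. -/
lemma Eomega_on_constraint (α : ℝ) (m : Fin N → ℝ) (ω : ℝ) (q : Fin N → E3)
    (hK : Kfun α m ω q = 0) :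
    Eomega α m ω q = (2 - α) / 2 * pot α m q := by
  unfold Kfun at hK
  unfold Eomega
  linarith

/-- Transfer of configurations between constraint sets by scaling. -/
lemma transfer (α : ℝ) (hα : 2 < α) (m : Fin N → ℝ)
    (ωa ωb : ℝ) (hωa : 0 < ωa) (hωb : 0 < ωb) (q : Fin N → E3)
    (h1 : OffDiag q) (h2 : comZero m q) (h3 : Kfun α m ωa q = 0) :
    ∃ q' : Fin N → E3, OffDiag q' ∧ comZero m q' ∧ Kfun α m ωb q' = 0 ∧
      Eomega α m ωb q' = (2 - α) / 2 * (((ωa / ωb) ^ (2 / (α + 2))) ^ (-α) * pot α m q) := by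
  have hr : 0 < ωa / ωb := div_pos hωa hωb
  set l : ℝ := (ωa / ωb) ^ (2 / (α + 2)) with hldef
  have hl : 0 < l := Real.rpow_pos_of_pos hr _
  have hα2 : (α : ℝ) + 2 ≠ 0 := by linarith
  have hpow : l ^ (α + 2) = (ωa / ωb) ^ (2 : ℕ) := by
    rw [hldef, ← Real.rpow_natCast (ωa / ωb) 2, ← Real.rpow_mul hr.le]
    congr 1
    push_cast
    field_simp
  have h2r : l ^ (2 : ℕ) = l ^ (-α) * (ωa / ωb) ^ (2 : ℕ) := by
    rw [← hpow, ← Real.rpow_natCast l 2, ← Real.rpow_add hl]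
    congr 1
    push_cast
    ring
  have hK2 : Kfun α m ωb (fun i => l • q i) = l ^ (-α) * Kfun α m ωa q := by
    unfold Kfun
    rw [inertia_smul, pot_smul α m q hl, h2r]
    have hb : ωb ≠ 0 := ne_of_gt hωb
    field_simp
  refine ⟨fun i => l • q i, ?_, ?_, ?_, ?_⟩
  · intro i j hij hc
    exact h1 i j hij (smul_right_injective _ (ne_of_gt hl) hc)
  · unfold comZero at h2 ⊢
    simp only [smul_comm _ l]
    rw [← Finset.smul_sum, h2, smul_zero]
  · rw [hK2, h3, mul_zero]
  · rw [Eomega_on_constraint α m ωb _ (by rw [hK2, h3, mul_zero]), pot_smul α m q hl]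

/-- **Monotonicity of the excited energy** (`α > 2`). -/
theorem Estar_monotone {N : ℕ} (α : ℝ) (hα : 2 < α) (m : Fin N → ℝ) (hm : ∀ i, 0 < m i)
    (ω₁ ω₂ : ℝ) (hω₁ : 0 < ω₁) (h : ω₁ ≤ ω₂) :
    Estar α m ω₁ ≤ Estar α m ω₂ := by
  have hω₂ : 0 < ω₂ := lt_of_lt_of_le hω₁ h
  unfold Estar
  set S₁ := {e : ℝ | ∃ q : Fin N → E3, OffDiag q ∧ comZero m q ∧ Kfun α m ω₁ q = 0 ∧
    e = Eomega α m ω₁ q} with hS₁def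
  set S₂ := {e : ℝ | ∃ q : Fin N → E3, OffDiag q ∧ comZero m q ∧ Kfun α m ω₂ q = 0 ∧
    e = Eomega α m ω₂ q} with hS₂def
  have hbdd : BddBelow S₁ := by
    refine ⟨0, fun e he => ?_⟩
    obtain ⟨q, h1, h2, h3, rfl⟩ := he
    rw [Eomega_on_constraint α m ω₁ q h3]
    have hU := pot_nonpos α m hm q
    nlinarith
  by_cases hS2 : S₂.Nonempty
  · refine le_csInf hS2 ?_
    rintro e ⟨q, h1, h2, h3, rfl⟩
    obtain ⟨q', k1, k2, k3, k4⟩ := transfer α hα m ω₂ ω₁ hω₂ hω₁ q h1 h2 h3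
    have hmem : Eomega α m ω₁ q' ∈ S₁ := ⟨q', k1, k2, k3, rfl⟩
    refine le_trans (csInf_le hbdd hmem) ?_
    rw [k4, Eomega_on_constraint α m ω₂ q h3]
    set l : ℝ := (ω₂ / ω₁) ^ (2 / (α + 2)) with hldef
    have hl1 : 1 ≤ l := by
      apply Real.one_le_rpow
      · rw [le_div_iff₀ hω₁]; linarith
      · positivity
    have ht : l ^ (-α) ≤ 1 :=
      Real.rpow_le_one_of_one_le_of_nonpos hl1 (by linarith)
    have ht0 : 0 < l ^ (-α) := Real.rpow_pos_of_pos (lt_of_lt_of_le one_pos hl1) _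
    have hU := pot_nonpos α m hm q
    have hTU : pot α m q ≤ l ^ (-α) * pot α m q := by nlinarith
    have hc : (2 - α) / 2 ≤ 0 := by linarith
    exact mul_le_mul_of_nonpos_left hTU hc
  · rw [Set.not_nonempty_iff_eq_empty] at hS2
    have hS1 : S₁ = ∅ := by
      rw [Set.eq_empty_iff_forall_notMem]
      rintro e ⟨q, h1, h2, h3, rfl⟩
      obtain ⟨q', k1, k2, k3, _⟩ := transfer α hα m ω₁ ω₂ hω₁ hω₂ q h1 h2 h3
      exact Set.eq_empty_iff_forall_notMem.mp hS2 _ ⟨q', k1, k2, k3, rfl⟩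
    rw [hS1, hS2]

end
end NBodyPaper
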